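/- arXiv:2310.19428 — 2 statements merged into one kernel-verified Lean document; each statement's English description precedes it below -/
import Mathlib

section
/- Let C be a category with finite limits and (E,M) a stable orthogonal factorization system on C. Then (E,M) is anti-right-proper (i.e. M contains every monomorphism of C) if and only if every morphism in E is a regular epimorphism. -/
open CategoryTheory CategoryTheory.Limits

universe v u

/-- An orthogonal factorization system `(E, M)` on a category `C`:
two classes of morphisms, each closed under composition and containing the
isomorphisms, such that every morphism factors as (arrow in `E`) ≫ (arrow in `M`),
and every commutative square with left side in `E` and right side in `M`
has a unique diagonal filler. -/
structure OrthFactSystem (C : Type u) [Category.{v} C] where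
  E : MorphismProperty C
  M : MorphismProperty C
  E_iso : ∀ {X Y : C} (f : X ⟶ Y) [IsIso f], E f
  M_iso : ∀ {X Y : C} (f : X ⟶ Y) [IsIso f], M f
  E_comp : ∀ {X Y Z : C} (f : X ⟶ Y) (g : Y ⟶ Z), E f → E g → E (f ≫ g)
  M_comp : ∀ {X Y Z : C} (f : X ⟶ Y) (g : Y ⟶ Z), M f → M g → M (f ≫ g)
  fac : ∀ {X Y : C} (f : X ⟶ Y), ∃ (Z : C) (e : X ⟶ Z) (m : Z ⟶ Y),
    E e ∧ M m ∧ e ≫ m = f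
  lift : ∀ {X Y A B : C} (e : X ⟶ Y) (m : A ⟶ B) (u : X ⟶ A) (v : Y ⟶ B),
    E e → M m → u ≫ m = e ≫ v → ∃! d : Y ⟶ A, e ≫ d = u ∧ d ≫ m = v

/-- A factorization system is stable if the left class `E` is stable under
pullback: in any pullback square, the pullback of a morphism in `E` along an
arbitrary morphism again lies in `E`. -/
def OrthFactSystem.Stable {C : Type u} [Category.{v} C] (S : OrthFactSystem C) : Prop :=
  ∀ {P X Y Z : C} (fst : P ⟶ X) (snd : P ⟶ Y) (f : X ⟶ Z) (g : Y ⟶ Z),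
    IsPullback fst snd f g → S.E f → S.E snd

/-!
If `M` contains the monomorphisms, every `e ∈ E` is orthogonal to all monos, hence a strong
epimorphism. To see that `e : X ⟶ Y` is the coequalizer of its kernel pair, take `g` coequalizing
that kernel pair and factor `⟨e, g⟩ = e' ≫ m` with `e' ∈ E`, `m ∈ M`. Unique diagonal fillers
show that `e'` also coequalizes the kernel pair of `e`; by stability the comparison map from that
kernel pair to the kernel pair of `w := m ≫ fst` is in `E`, hence epi, so `w` is mono. Being also a
strong epi (`e' ≫ w = e`), `w` is an isomorphism and `g` factors through `e` via `w⁻¹ ≫ m ≫ snd`.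
Conversely, if `E` consists of regular epis, the `E`-part of the factorization of a mono is a mono
regular epi, hence an isomorphism.
-/

namespace OrthFactSystem

variable {C : Type u} [Category.{v} C] (S : OrthFactSystem C)

def AntiRightProper : Prop :=
  ∀ {A B : C} (m : A ⟶ B), Mono m → S.M m

instance : S.E.IsStableUnderComposition := ⟨S.E_comp⟩

lemma isStableUnderBaseChange (hS : S.Stable) : S.E.IsStableUnderBaseChange :=
  ⟨fun sq hg => hS _ _ _ _ sq hg⟩

lemma hasLiftingProperty {X Y A B : C} {e : X ⟶ Y} {m : A ⟶ B} (he : S.E e) (hm : S.M m) :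
    HasLiftingProperty e m :=
  ⟨fun {u v} sq => by
    obtain ⟨d, ⟨hd₁, hd₂⟩, -⟩ := S.lift e m u v he hm sq.w
    exact ⟨⟨⟨d, hd₁, hd₂⟩⟩⟩⟩

/-- The diagonal filler of the square with sides `p₁` and `m` is `u` itself, as one sees by
precomposing with the common section `s`. -/
lemma comp_eq_comp_of_comp_M {K X A B : C} {p₁ p₂ : K ⟶ X} (s : X ⟶ K)
    (hs₁ : s ≫ p₁ = 𝟙 X) (hs₂ : s ≫ p₂ = 𝟙 X) (hp₁ : S.E p₁)
    {u : X ⟶ A} {m : A ⟶ B} (hm : S.M m) (h : p₁ ≫ u ≫ m = p₂ ≫ u ≫ m) :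
    p₁ ≫ u = p₂ ≫ u := by
  obtain ⟨d, ⟨hd₁, -⟩, -⟩ := S.lift p₁ m (p₂ ≫ u) (u ≫ m) hp₁ hm (by simpa using h.symm)
  have hdu : d = u := by
    have := congrArg (s ≫ ·) hd₁
    simpa only [← Category.assoc, hs₁, hs₂, Category.id_comp] using this
  exact hdu ▸ hd₁

namespace AntiRightProper

variable {S}

lemma epi [HasEqualizers C] (hS : S.AntiRightProper) {X Y : C} {e : X ⟶ Y} (he : S.E e) :
    Epi e :=
  ⟨fun {Z} f g hfg => by
    obtain ⟨d, ⟨-, hd⟩, -⟩ := S.lift e (equalizer.ι f g) (equalizer.lift e hfg) (𝟙 Y) he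
      (hS _ inferInstance) (by simp)
    have : IsSplitEpi (equalizer.ι f g) := ⟨⟨⟨d, hd⟩⟩⟩
    exact eq_of_epi_equalizer⟩

lemma strongEpi [HasEqualizers C] (hS : S.AntiRightProper) {X Y : C} {e : X ⟶ Y} (he : S.E e) :
    StrongEpi e :=
  ⟨hS.epi he, fun _ _ m _ => S.hasLiftingProperty he (hS m ‹_›)⟩

variable [HasFiniteLimits C]

lemma mono_of_E_fac (hS : S.AntiRightProper) (hst : S.Stable) {X V Y : C} {e : X ⟶ V}
    {w : V ⟶ Y} {f : X ⟶ Y} (he : S.E e) (hf : e ≫ w = f)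
    (h : pullback.fst f f ≫ e = pullback.snd f f ≫ e) : Mono w := by
  have := S.isStableUnderBaseChange hst
  let κ : pullback f f ⟶ pullback w w :=
    pullback.map f f w w e e (𝟙 Y) (by simp [hf]) (by simp [hf])
  have : Epi κ := hS.epi (MorphismProperty.pullbackMap he he hf.symm hf.symm)
  refine IsKernelPair.mono_of_eq_fst_snd (IsPullback.of_hasPullback w w) ?_
  rw [← cancel_epi κ]
  simp only [κ, pullback.lift_fst, pullback.lift_snd]
  exact h

lemma exists_fac_of_kernelPair (hS : S.AntiRightProper) (hst : S.Stable) {X Y Z : C}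
    {e : X ⟶ Y} (he : S.E e) {g : X ⟶ Z} (hg : pullback.fst e e ≫ g = pullback.snd e e ≫ g) :
    ∃ h : Y ⟶ Z, e ≫ h = g := by
  obtain ⟨V, e', m, he', hm, hfac⟩ := S.fac (prod.lift e g)
  let w := m ≫ prod.fst
  have hw : e' ≫ w = e := by rw [← Category.assoc, hfac, prod.lift_fst]
  have hfst : S.E (pullback.fst e e) := hst _ _ _ _ (IsPullback.of_hasPullback e e).flip he
  have hcoeq : pullback.fst e e ≫ e' = pullback.snd e e ≫ e' :=
    S.comp_eq_comp_of_comp_M (pullback.diagonal e) (by simp) (by simp) hfst hm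
      (by rw [hfac]; ext <;> simp [pullback.condition, hg])
  have : Mono w := hS.mono_of_E_fac hst he' hw hcoeq
  have : StrongEpi (e' ≫ w) := hw ▸ hS.strongEpi he
  have : StrongEpi w := strongEpi_of_strongEpi e' w
  have : IsIso w := isIso_of_mono_of_strongEpi w
  exact ⟨inv w ≫ m ≫ prod.snd, by
    rw [← hw, Category.assoc, IsIso.hom_inv_id_assoc, reassoc_of% hfac, prod.lift_snd]⟩

noncomputable def regularEpi (hS : S.AntiRightProper) (hst : S.Stable) {X Y : C} {e : X ⟶ Y}
    (he : S.E e) : RegularEpi e where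
  W := pullback e e
  left := pullback.fst e e
  right := pullback.snd e e
  w := pullback.condition
  isColimit := Cofork.IsColimit.ofExistsUnique fun s => by
    have := hS.epi he
    obtain ⟨h, hh⟩ := hS.exists_fac_of_kernelPair hst he s.condition
    exact ⟨h, hh, fun _ hh' => (cancel_epi e).1 (hh'.trans hh.symm)⟩

end AntiRightProper

lemma antiRightProper_of_regularEpi
    (hreg : ∀ {X Y : C} (f : X ⟶ Y), S.E f → Nonempty (RegularEpi f)) :
    S.AntiRightProper := fun {_ _} f hf => by
  obtain ⟨V, e, m, he, hm, rfl⟩ := S.fac f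
  have : IsRegularEpi e := ⟨hreg e he⟩
  have : Mono e := mono_of_mono e m
  have : IsIso e := isIso_of_mono_of_strongEpi e
  exact S.M_comp e m (S.M_iso e) hm

end OrthFactSystem

/-- For a stable orthogonal factorization system `(E, M)` on a
finitely complete category, `M` contains every monomorphism (anti-right-properness)
if and only if every morphism in `E` is a regular epimorphism. -/
theorem anti_right_proper_iff_E_regularEpi
    {C : Type u} [Category.{v} C] [HasFiniteLimits C]
    (S : OrthFactSystem C) (hS : S.Stable) :
    (∀ {A B : C} (m : A ⟶ B), Mono m → S.M m) ↔
      (∀ {X Y : C} (f : X ⟶ Y), S.E f → Nonempty (RegularEpi f)) :=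
  ⟨fun hmono _ _ _ hf => ⟨OrthFactSystem.AntiRightProper.regularEpi hmono hS hf⟩,
    S.antiRightProper_of_regularEpi⟩
end

section
/- Let C be a category with finite limits and (E,M) a stable orthogonal factorization system on C such that M contains every monomorphism. Then every morphism f : A → B in E is the coequalizer of its kernel pair; in particular every morphism in E is a regular epimorphism. -/
open CategoryTheory CategoryTheory.Limits

universe v u

/-- Any morphism in `E` is an epimorphism, since `M` contains all monomorphisms. -/
lemma OrthFactSystem.epi_of_E {C : Type u} [Category.{v} C] [HasEqualizers C]
    (S : OrthFactSystem C) (hM : ∀ {A B : C} (m : A ⟶ B), Mono m → S.M m)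
    {A B : C} (f : A ⟶ B) (hf : S.E f) : Epi f := by
  constructor
  intro Z u v huv
  obtain ⟨d, ⟨hd1, hd2⟩, -⟩ := S.lift f (equalizer.ι u v) (equalizer.lift f huv) (𝟙 B) hf
    (hM _ inferInstance) (by rw [equalizer.lift_ι, Category.comp_id])
  calc u = (d ≫ equalizer.ι u v) ≫ u := by rw [hd2, Category.id_comp]
    _ = d ≫ equalizer.ι u v ≫ u := by rw [Category.assoc]
    _ = d ≫ equalizer.ι u v ≫ v := by rw [equalizer.condition]
    _ = (d ≫ equalizer.ι u v) ≫ v := by rw [Category.assoc]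
    _ = v := by rw [hd2, Category.id_comp]

/-- The class `E` is closed under right cancellation. -/
lemma OrthFactSystem.E_cancel {C : Type u} [Category.{v} C] [HasEqualizers C]
    (S : OrthFactSystem C) (hM : ∀ {A B : C} (m : A ⟶ B), Mono m → S.M m)
    {A Z B : C} (e : A ⟶ Z) (p : Z ⟶ B) (he : S.E e) (hc : S.E (e ≫ p)) : S.E p := by
  obtain ⟨Z', e', m', he', hm', hfac⟩ := S.fac p
  have hepi : Epi e := S.epi_of_E hM e he
  obtain ⟨d, ⟨hd1, hd2⟩, -⟩ := S.lift (e ≫ p) m' (e ≫ e') (𝟙 B) hc hm'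
    (by rw [Category.comp_id, Category.assoc, hfac])
  have hpd : p ≫ d = e' := by
    have : e ≫ p ≫ d = e ≫ e' := by rw [← Category.assoc, hd1]
    exact (cancel_epi e).1 this
  obtain ⟨d0, _, hu⟩ := S.lift e' m' e' m' he' hm' rfl
  have h1 : m' ≫ d = d0 := hu _ ⟨by rw [← Category.assoc, hfac, hpd],
    by rw [Category.assoc, hd2, Category.comp_id]⟩
  have h2 : 𝟙 Z' = d0 := hu _ ⟨Category.comp_id _, Category.id_comp _⟩
  have : IsIso m' := ⟨d, h1.trans h2.symm, hd2⟩
  rw [← hfac]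
  exact S.E_comp _ _ he' (S.E_iso m')

/-- Let `(E, M)` be a stable orthogonal factorization system on a
finitely complete category such that `M` contains every monomorphism. Then every
morphism `f` in `E` is the coequalizer of its kernel pair; in particular it is a
regular epimorphism. -/
theorem E_is_coequalizer_of_kernel_pair
    {C : Type u} [Category.{v} C] [HasFiniteLimits C]
    (S : OrthFactSystem C) (hS : S.Stable)
    (hM : ∀ {A B : C} (m : A ⟶ B), Mono m → S.M m)
    {A B : C} (f : A ⟶ B) (hf : S.E f) :
    Nonempty (IsColimit (Cofork.ofπ f (pullback.condition (f := f) (g := f)))) ∧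
      Nonempty (RegularEpi f) := by
  have hepi : Epi f := S.epi_of_E hM f hf
  -- the key descent property
  have kd : ∀ {X : C} (g : A ⟶ X), pullback.fst f f ≫ g = pullback.snd f f ≫ g →
      ∃ h : B ⟶ X, f ≫ h = g := by
    intro X g hg
    obtain ⟨Z, e, m, he, hm, hem⟩ := S.fac (prod.lift f g)
    set p : Z ⟶ B := m ≫ prod.fst with hpdef
    set t : Z ⟶ X := m ≫ prod.snd with htdef
    have hep : e ≫ p = f := by rw [hpdef, ← Category.assoc, hem, prod.lift_fst]
    have het : e ≫ t = g := by rw [htdef, ← Category.assoc, hem, prod.lift_snd]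
    have hpE : S.E p := S.E_cancel hM e p he (by rwa [hep])
    -- the comparison maps between the kernel pairs of `f` and of `p`
    let μ : pullback f f ⟶ pullback f p :=
      pullback.lift (pullback.fst f f) (pullback.snd f f ≫ e)
        (by rw [Category.assoc, hep]; exact pullback.condition)
    let ν : pullback f p ⟶ pullback p p :=
      pullback.lift (pullback.fst f p ≫ e) (pullback.snd f p)
        (by rw [Category.assoc, hep]; exact pullback.condition)
    -- both are pullbacks of `e`, hence in `E` by stability
    have pb1 : IsPullback (pullback.snd f f) μ e (pullback.snd f p) := by
      refine IsPullback.of_bot ?_ (pullback.lift_snd _ _ _).symm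
        ((IsPullback.of_hasPullback f p).flip)
      have h1 : μ ≫ pullback.fst f p = pullback.fst f f := pullback.lift_fst _ _ _
      rw [h1, hep]
      exact (IsPullback.of_hasPullback f f).flip
    have pb2 : IsPullback (pullback.fst f p) ν e (pullback.fst p p) := by
      refine IsPullback.of_bot ?_ (pullback.lift_fst _ _ _).symm
        (IsPullback.of_hasPullback p p)
      have h1 : ν ≫ pullback.snd p p = pullback.snd f p := pullback.lift_snd _ _ _
      rw [h1, hep]
      exact IsPullback.of_hasPullback f p
    have hμE : S.E μ := hS _ μ e _ pb1 he
    have hνE : S.E ν := hS _ ν e _ pb2 he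
    have hεepi : Epi (μ ≫ ν) := S.epi_of_E hM _ (S.E_comp μ ν hμE hνE)
    have c1 : (μ ≫ ν) ≫ pullback.fst p p = pullback.fst f f ≫ e := by
      rw [Category.assoc]
      have h1 : ν ≫ pullback.fst p p = pullback.fst f p ≫ e := pullback.lift_fst _ _ _
      rw [h1, ← Category.assoc]
      have h2 : μ ≫ pullback.fst f p = pullback.fst f f := pullback.lift_fst _ _ _
      rw [h2]
    have c2 : (μ ≫ ν) ≫ pullback.snd p p = pullback.snd f f ≫ e := by
      rw [Category.assoc]
      have h1 : ν ≫ pullback.snd p p = pullback.snd f p := pullback.lift_snd _ _ _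
      rw [h1]
      exact pullback.lift_snd _ _ _
    -- the kernel pair of `p` is coequalized by `t`
    have hqt : pullback.fst p p ≫ t = pullback.snd p p ≫ t := by
      apply (cancel_epi (μ ≫ ν)).1
      calc (μ ≫ ν) ≫ pullback.fst p p ≫ t = ((μ ≫ ν) ≫ pullback.fst p p) ≫ t :=
            (Category.assoc _ _ _).symm
        _ = (pullback.fst f f ≫ e) ≫ t := by rw [c1]
        _ = pullback.fst f f ≫ g := by rw [Category.assoc, het]
        _ = pullback.snd f f ≫ g := hg
        _ = (pullback.snd f f ≫ e) ≫ t := by rw [Category.assoc, het]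
        _ = ((μ ≫ ν) ≫ pullback.snd p p) ≫ t := by rw [c2]
        _ = (μ ≫ ν) ≫ pullback.snd p p ≫ t := Category.assoc _ _ _
    have hqm : pullback.fst p p ≫ m = pullback.snd p p ≫ m := by
      apply Limits.prod.hom_ext
      · rw [Category.assoc, Category.assoc, ← hpdef]
        exact pullback.condition
      · rw [Category.assoc, Category.assoc, ← htdef]
        exact hqt
    -- hence the kernel pair of `p` is trivial, so `p` is a monomorphism
    have hq2E : S.E (pullback.snd p p) := hS _ _ p p (IsPullback.of_hasPullback p p) hpE
    have hq12 : pullback.fst p p = pullback.snd p p := by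
      obtain ⟨d, ⟨hd1, hd2⟩, -⟩ := S.lift (pullback.snd p p) m (pullback.fst p p) m
        hq2E hm hqm
      have hδ : d = 𝟙 Z := by
        calc d = (pullback.lift (𝟙 Z) (𝟙 Z) rfl ≫ pullback.snd p p) ≫ d := by
              rw [pullback.lift_snd, Category.id_comp]
          _ = pullback.lift (𝟙 Z) (𝟙 Z) rfl ≫ pullback.snd p p ≫ d := by
              rw [Category.assoc]
          _ = pullback.lift (𝟙 Z) (𝟙 Z) rfl ≫ pullback.fst p p := by rw [hd1]
          _ = 𝟙 Z := pullback.lift_fst _ _ _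
      rw [← hd1, hδ, Category.comp_id]
    have hmono : Mono p := by
      constructor
      intro T a b hab
      calc a = pullback.lift a b hab ≫ pullback.fst p p := (pullback.lift_fst _ _ _).symm
        _ = pullback.lift a b hab ≫ pullback.snd p p := by rw [hq12]
        _ = b := pullback.lift_snd _ _ _
    -- `p` is in both classes, hence an isomorphism
    have hiso : IsIso p := by
      obtain ⟨d, ⟨hd1, hd2⟩, -⟩ := S.lift p p (𝟙 Z) (𝟙 B) hpE (hM p hmono)
        (by rw [Category.id_comp, Category.comp_id])
      exact ⟨d, hd1, hd2⟩
    refine ⟨inv p ≫ t, ?_⟩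
    rw [← hep, Category.assoc, IsIso.hom_inv_id_assoc, het]
  have colim : IsColimit (Cofork.ofπ f (pullback.condition (f := f) (g := f))) := by
    refine Cofork.IsColimit.mk _ (fun s => (kd s.π s.condition).choose)
      (fun s => ?_) (fun s m' hm' => ?_)
    · exact (kd s.π s.condition).choose_spec
    · apply (cancel_epi f).1
      rw [(kd s.π s.condition).choose_spec]
      simpa using hm'
  exact ⟨⟨colim⟩, ⟨⟨pullback f f, pullback.fst f f, pullback.snd f f,
    pullback.condition, colim⟩⟩⟩
end
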